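/- There exists a flow f that is a cycle (f² ≠ 0) but is nilpotent: specifically f = (x • c) ⊣ (d • x) satisfies f² ≠ 0 and f³ = 0. -/

import Mathlib

/-! First-order terms over variables `ℕ` and function symbols `ℕ` (each symbol
used with the arity of its argument list), substitutions, unification, and
flows `t ⊣ u` (with `Var(t) ⊆ Var(u)`, considered up to renaming). -/

/-- First-order terms. -/
inductive Term where
  | var : ℕ → Term
  | fn : ℕ → List Term → Term

mutual
/-- Apply a substitution to a term. -/
def Term.subst (θ : ℕ → Term) : Term → Term
  | .var n => θ n
  | .fn f ts => .fn f (Term.substList θ ts)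
/-- Apply a substitution to a list of terms. -/
def Term.substList (θ : ℕ → Term) : List Term → List Term
  | [] => []
  | t :: ts => Term.subst θ t :: Term.substList θ ts
end

mutual
/-- Variables occurring in a term. -/
def Term.vars : Term → Set ℕ
  | .var n => {n}
  | .fn _ ts => Term.varsList ts
/-- Variables occurring in a list of terms. -/
def Term.varsList : List Term → Set ℕ
  | [] => ∅
  | t :: ts => Term.vars t ∪ Term.varsList ts
end

/-- `θ` is a unifier of `t` and `u`. -/
def IsUnifier (θ : ℕ → Term) (t u : Term) : Prop := t.subst θ = u.subst θ

/-- `θ'` is an instance of `θ` (factors through `θ`). -/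
def InstanceOf (θ' θ : ℕ → Term) : Prop := ∃ ρ, ∀ n, θ' n = (θ n).subst ρ

/-- `θ` is a most general unifier of `t` and `u`. -/
def IsMGU (θ : ℕ → Term) (t u : Term) : Prop :=
  IsUnifier θ t u ∧ ∀ θ', IsUnifier θ' t u → InstanceOf θ' θ

/-- Apply a renaming (a bijection on variables) to a term. -/
def Term.rename (α : ℕ ≃ ℕ) (t : Term) : Term := t.subst fun n => .var (α n)

/-- Two terms are matchable if renamings of them with disjoint sets of
variables are unifiable. -/
def Matchable (t u : Term) : Prop :=
  ∃ α β : ℕ ≃ ℕ, Disjoint (t.rename α).vars (u.rename β).vars ∧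
    ∃ θ, IsUnifier θ (t.rename α) (u.rename β)

/-- A flow `t ⊣ u` with `Var(t) ⊆ Var(u)`. -/
structure RFlow where
  lhs : Term
  rhs : Term
  sub : lhs.vars ⊆ rhs.vars

instance : Inhabited RFlow := ⟨⟨.var 0, .var 0, Set.Subset.rfl⟩⟩

/-- Equality of flows up to renaming. -/
def FlowEquiv (f g : RFlow) : Prop :=
  ∃ α : ℕ ≃ ℕ, g.lhs = f.lhs.rename α ∧ g.rhs = f.rhs.rename α

/-- `r` is a resolution product of `f` and `g`: after renaming `g` apart from
`f`, the MGU `θ` of `f`'s right term and `g`'s left term exists and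
`r = θ(f.lhs) ⊣ θ(g.rhs)`. -/
def FlowCompRel (f g r : RFlow) : Prop :=
  ∃ g' : RFlow, FlowEquiv g g' ∧ Disjoint f.rhs.vars g'.lhs.vars ∧
    ∃ θ, IsMGU θ f.rhs g'.lhs ∧
      r.lhs = f.lhs.subst θ ∧ r.rhs = g'.rhs.subst θ

open Classical in
/-- The product of flows (`none` = undefined = 0). -/
noncomputable def fcomp (f g : RFlow) : Option RFlow :=
  if h : ∃ r, FlowCompRel f g r then some h.choose else none

/-- Product extended to possibly-undefined flows. -/
noncomputable def fcompO (a b : Option RFlow) : Option RFlow :=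
  a.bind fun f => b.bind fun g => fcomp f g

/-- Equality up to renaming of possibly-undefined flows. -/
def OEquiv (a b : Option RFlow) : Prop :=
  (a = none ∧ b = none) ∨ ∃ f g, a = some f ∧ b = some g ∧ FlowEquiv f g

/-- The binary function symbol `•`. -/
def bul (a b : Term) : Term := .fn 0 [a, b]

/-- The constant `c`. -/
def cC : Term := .fn 1 []

/-- The constant `d`. -/
def cD : Term := .fn 2 []

/-- The flow `(x • c) ⊣ (d • x)`. -/
def fCyc : RFlow :=
  ⟨bul (.var 0) cC, bul cD (.var 0), by
    simp [bul, cC, cD, Term.vars, Term.varsList]⟩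

/-
The only way to compose `f` with a renamed copy `(y • c) ⊣ (d • y)` of itself is to unify
`d • x` with `y • c`, which forces `x ↦ c, y ↦ d`; this substitution is most general, and it
gives `f² = (c • c) ⊣ (d • d)`. Whatever renaming is chosen, the right term of `f²` is the
ground term `d • d`, and composing once more would have to unify it with `y • c`, i.e. `d`
with `c`, which is impossible.
-/

namespace Term

@[simp]
lemma subst_var (θ : ℕ → Term) (n : ℕ) : (Term.var n).subst θ = θ n := by
  simp only [Term.subst]

@[simp]
lemma subst_bul (θ : ℕ → Term) (a b : Term) :
    (bul a b).subst θ = bul (a.subst θ) (b.subst θ) := by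
  simp only [bul, Term.subst, Term.substList]

@[simp]
lemma subst_const (θ : ℕ → Term) (f : ℕ) : (Term.fn f []).subst θ = .fn f [] := by
  simp only [Term.subst, Term.substList]

@[simp]
lemma subst_cC (θ : ℕ → Term) : cC.subst θ = cC := subst_const θ 1

@[simp]
lemma subst_cD (θ : ℕ → Term) : cD.subst θ = cD := subst_const θ 2

@[simp]
lemma rename_bul (α : ℕ ≃ ℕ) (a b : Term) :
    (bul a b).rename α = bul (a.rename α) (b.rename α) :=
  subst_bul _ a b

@[simp]
lemma rename_var (α : ℕ ≃ ℕ) (n : ℕ) : (Term.var n).rename α = .var (α n) := rfl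

@[simp]
lemma rename_cC (α : ℕ ≃ ℕ) : cC.rename α = cC := subst_cC _

@[simp]
lemma rename_cD (α : ℕ ≃ ℕ) : cD.rename α = cD := subst_cD _

@[simp]
lemma vars_bul (a b : Term) : (bul a b).vars = a.vars ∪ b.vars := by
  simp only [bul, Term.vars, Term.varsList, Set.union_empty]

@[simp]
lemma vars_var (n : ℕ) : (Term.var n).vars = {n} := by
  simp only [Term.vars]

@[simp]
lemma vars_cC : cC.vars = ∅ := by
  simp only [cC, Term.vars, Term.varsList]

@[simp]
lemma vars_cD : cD.vars = ∅ := by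
  simp only [cD, Term.vars, Term.varsList]

end Term

@[simp]
lemma bul_inj {a b a' b' : Term} : bul a b = bul a' b' ↔ a = a' ∧ b = b' := by
  simp only [bul, Term.fn.injEq, List.cons.injEq, and_true, true_and]

@[simp]
lemma cD_ne_cC : cD ≠ cC := by
  simp only [cD, cC, ne_eq, Term.fn.injEq, OfNat.ofNat_ne_one, and_true, not_false_eq_true]

lemma IsMGU.of_forall_eq_subst {θ : ℕ → Term} {t u : Term} (hθ : IsUnifier θ t u)
    (h : ∀ θ', IsUnifier θ' t u → ∀ n, θ' n = (θ n).subst θ') : IsMGU θ t u :=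
  ⟨hθ, fun θ' hθ' => ⟨θ', h θ' hθ'⟩⟩

lemma FlowCompRel.exists_unifier {f g r : RFlow} (h : FlowCompRel f g r) :
    ∃ α θ, IsUnifier θ f.rhs (g.lhs.rename α) ∧
      r.lhs = f.lhs.subst θ ∧ r.rhs = (g.rhs.rename α).subst θ := by
  obtain ⟨g', ⟨α, hl, hr⟩, -, θ, ⟨hθ, -⟩, hrl, hrr⟩ := h
  exact ⟨α, θ, hl ▸ hθ, hrl, hr ▸ hrr⟩

lemma fcomp_eq_none_iff {f g : RFlow} : fcomp f g = none ↔ ¬ ∃ r, FlowCompRel f g r := by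
  unfold fcomp
  split_ifs with h <;> simp only [h, not_true_eq_false, not_false_eq_true]

lemma FlowCompRel.of_fcomp_eq_some {f g r : RFlow} (h : fcomp f g = some r) :
    FlowCompRel f g r := by
  unfold fcomp at h
  split_ifs at h with hex
  exact Option.some.inj h ▸ hex.choose_spec

lemma fcomp_eq_none_of_not_unifiable {f g : RFlow}
    (h : ∀ α θ, ¬ IsUnifier θ f.rhs (g.lhs.rename α)) : fcomp f g = none := by
  refine fcomp_eq_none_iff.2 fun ⟨r, hr⟩ => ?_
  obtain ⟨α, θ, hθ, -⟩ := hr.exists_unifier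
  exact h α θ hθ

@[simp]
lemma fcompO_some_some (f g : RFlow) : fcompO (some f) (some g) = fcomp f g := rfl

def fCycRenamed : RFlow :=
  ⟨bul (.var 1) cC, bul cD (.var 1), by simp⟩

def fCycSq : RFlow :=
  ⟨bul cC cC, bul cD cD, by simp⟩

noncomputable def mguCyc : ℕ → Term := fun n => if n = 0 then cC else if n = 1 then cD else .var n

lemma isMGU_mguCyc : IsMGU mguCyc fCyc.rhs fCycRenamed.lhs := by
  refine .of_forall_eq_subst (by simp [IsUnifier, fCyc, fCycRenamed, mguCyc]) ?_
  intro θ' hθ' n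
  obtain ⟨h0, h1⟩ : cD = θ' 1 ∧ θ' 0 = cC := by
    simpa [IsUnifier, fCyc, fCycRenamed] using hθ'
  rcases eq_or_ne n 0 with rfl | hn0
  · simp [mguCyc, h1]
  rcases eq_or_ne n 1 with rfl | hn1
  · simp [mguCyc, ← h0]
  · simp [mguCyc, hn0, hn1]

lemma flowCompRel_fCyc_fCyc : FlowCompRel fCyc fCyc fCycSq := by
  refine ⟨fCycRenamed, ⟨Equiv.swap 0 1, ?_, ?_⟩, ?_, mguCyc, isMGU_mguCyc, ?_, ?_⟩ <;>
    simp [fCyc, fCycRenamed, fCycSq, mguCyc]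

lemma FlowCompRel.fCyc_fCyc_rhs {r : RFlow} (h : FlowCompRel fCyc fCyc r) :
    r.rhs = bul cD cD := by
  obtain ⟨α, θ, hθ, -, hr⟩ := h.exists_unifier
  obtain ⟨hα, -⟩ : cD = θ (α 0) ∧ θ 0 = cC := by
    simpa [IsUnifier, fCyc] using hθ
  simp [hr, fCyc, ← hα]

lemma fcomp_fCyc_eq_none_of_rhs_eq {r : RFlow} (hr : r.rhs = bul cD cD) : fcomp r fCyc = none :=
  fcomp_eq_none_of_not_unifiable fun α θ hθ => by simp [IsUnifier, hr, fCyc] at hθ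

/-- the flow `f = (x • c) ⊣ (d • x)` is a cycle (`f² ≠ 0`) yet
nilpotent (`f³ = 0`). -/
theorem cycle_but_nilpotent :
    fcomp fCyc fCyc ≠ none ∧ fcompO (fcomp fCyc fCyc) (some fCyc) = none := by
  refine ⟨fun h => fcomp_eq_none_iff.1 h ⟨_, flowCompRel_fCyc_fCyc⟩, ?_⟩
  cases hsq : fcomp fCyc fCyc with
  | none => rfl
  | some r =>
    rw [fcompO_some_some]
    exact fcomp_fCyc_eq_none_of_rhs_eq (FlowCompRel.of_fcomp_eq_some hsq).fCyc_fCyc_rhs
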